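/- Let p > 1, 1 ≤ q ≤ p, β > 0, and g : (0,1] → [0,∞) be non-increasing with ∫₀¹ g(u) du = f. Then ∫₀¹ ((1/t)∫₀ᵗ g(u) du)^p dt ≤ −(q(β+1)/((p−1)qβ+(p−q)))·f^p + (p(β+1)^q/((p−1)qβ+(p−q)))·∫₀¹ ((1/t)∫₀ᵗ g(u) du)^(p−q) g(t)^q dt. -/

import Mathlib

/-
With `H t = (1/t) ∫₀ᵗ g`, the function `t ↦ t H(t)^p` has derivative `p H^(p-1) g - (p-1) H^p`
wherever `g` is continuous, i.e. off a countable set since `g` is monotone. Integrating over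
`[ε, 1]` and applying Young's inequality `q(β+1) H^(p-1) g ≤ (q-1) H^p + (β+1)^q H^(p-q) g^q`
(valid because `g ≤ H` for non-increasing `g`) gives the inequality on `[ε, 1]` up to the
boundary term `ε H(ε)^p`, which Jensen bounds by `∫₀^ε g^p`. The case `q = p`, `β = 1` bounds
`∫_ε^1 H^p` uniformly, so `H^p` is integrable, and `ε → 0` gives the claim.
-/

open MeasureTheory Set Filter Topology

theorem young_rpow_sub_one_mul_le {p q β h c : ℝ} (hq : 1 ≤ q) (hβ : 0 < β) (hc : 0 ≤ c)
    (hch : c ≤ h) :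
    q * (β + 1) * (h ^ (p - 1) * c) ≤ (q - 1) * h ^ p + (β + 1) ^ q * (h ^ (p - q) * c ^ q) := by
  have hq0 : 0 < q := by linarith
  have hβ1 : 0 < β + 1 := by linarith
  rcases hc.eq_or_lt with rfl | hc
  · rw [mul_zero, mul_zero, Real.zero_rpow hq0.ne', mul_zero, mul_zero, add_zero]
    exact mul_nonneg (by linarith) (Real.rpow_nonneg hch p)
  have hh : 0 < h := hc.trans_le hch
  have amgm := Real.geom_mean_le_arith_mean2_weighted (w₁ := (q - 1) / q) (w₂ := 1 / q)
    (p₁ := h ^ p / (β + 1)) (p₂ := (β + 1) ^ (q - 1) * (h ^ (p - q) * c ^ q))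
    (by positivity) (by positivity) (by positivity) (by positivity) (by field_simp; ring)
  have hgeom : (h ^ p / (β + 1)) ^ ((q - 1) / q) *
      ((β + 1) ^ (q - 1) * (h ^ (p - q) * c ^ q)) ^ (1 / q) = h ^ (p - 1) * c := by
    rw [Real.div_rpow (by positivity) hβ1.le, Real.mul_rpow (by positivity) (by positivity),
      Real.mul_rpow (by positivity) (by positivity), ← Real.rpow_mul hh.le,
      ← Real.rpow_mul hh.le, ← Real.rpow_mul hβ1.le, ← Real.rpow_mul hc.le,
      mul_one_div, mul_one_div, mul_one_div_cancel hq0.ne', Real.rpow_one]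
    have e : p - 1 = p * ((q - 1) / q) + (p - q) / q := by field_simp; ring
    rw [e, Real.rpow_add hh]
    field_simp
  have harith : q * (β + 1) * ((q - 1) / q * (h ^ p / (β + 1)) +
      1 / q * ((β + 1) ^ (q - 1) * (h ^ (p - q) * c ^ q))) =
      (q - 1) * h ^ p + (β + 1) ^ q * (h ^ (p - q) * c ^ q) := by
    rw [Real.rpow_sub_one hβ1.ne']
    field_simp
  rw [← harith, ← hgeom]
  gcongr

theorem Integrable.of_rpow {α : Type*} [MeasurableSpace α] {μ : Measure α} [IsFiniteMeasure μ]
    {f : α → ℝ} {p : ℝ} (hp : 1 ≤ p) (hf : AEStronglyMeasurable f μ) (hf0 : 0 ≤ᵐ[μ] f)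
    (hfp : Integrable (fun x => f x ^ p) μ) : Integrable f μ := by
  have hmem : MemLp f (ENNReal.ofReal p) μ := by
    rw [← integrable_norm_rpow_iff hf (by simp; linarith) ENNReal.ofReal_ne_top,
      ENNReal.toReal_ofReal (by linarith)]
    refine hfp.congr ?_
    filter_upwards [hf0] with x hx
    rw [Real.norm_of_nonneg hx]
  exact hmem.integrable (by simpa using hp)

theorem IntegrableOn.rpow_sub_mul_rpow_of_le {s : Set ℝ} {G H : ℝ → ℝ} {p q : ℝ}
    (hs : MeasurableSet s) (hq : 0 < q) (hqp : q ≤ p) (hH : ContinuousOn H s)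
    (hG : AEStronglyMeasurable G (volume.restrict s)) (hG0 : ∀ t ∈ s, 0 ≤ G t)
    (hGH : ∀ t ∈ s, G t ≤ H t) (hHp : IntegrableOn (fun t => H t ^ p) s) :
    IntegrableOn (fun t => H t ^ (p - q) * G t ^ q) s := by
  refine hHp.mono' (((hH.aestronglyMeasurable hs).aemeasurable.pow_const _).mul
    (hG.aemeasurable.pow_const _)).aestronglyMeasurable ?_
  filter_upwards [ae_restrict_mem hs] with t ht
  have hH0 : 0 ≤ H t := (hG0 t ht).trans (hGH t ht)
  calc ‖H t ^ (p - q) * G t ^ q‖ = H t ^ (p - q) * G t ^ q :=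
        Real.norm_of_nonneg (by have := hG0 t ht; positivity)
    _ ≤ H t ^ (p - q) * H t ^ q := by gcongr <;> simp only [hG0 t ht, hGH t ht]
    _ = H t ^ p := by rw [← Real.rpow_add' hH0 (by linarith), sub_add_cancel]

theorem tendsto_setIntegral_Ioc_nhdsGT {f : ℝ → ℝ} {a b : ℝ} (hab : a < b)
    (hf : IntegrableOn f (Ioc a b)) :
    Tendsto (fun ε => ∫ x in Ioc ε b, f x) (𝓝[>] a) (𝓝 (∫ x in Ioc a b, f x)) := by
  have hcont := intervalIntegral.continuousOn_primitive_interval_left (f := f) (a := a) (b := b)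
    (by rw [uIcc_of_le hab.le]; exact (integrableOn_Icc_iff_integrableOn_Ioc).2 hf)
  have htend := ((hcont a left_mem_uIcc).mono_of_mem_nhdsWithin
    (by rw [uIcc_of_le hab.le]; exact Icc_mem_nhdsGT hab)).tendsto
  rw [intervalIntegral.integral_of_le hab.le] at htend
  refine htend.congr' ?_
  filter_upwards [Ioc_mem_nhdsGT hab] with ε hε
  exact intervalIntegral.integral_of_le hε.2

noncomputable def hardyAverage (g : ℝ → ℝ) (t : ℝ) : ℝ := (1 / t) * ∫ u in Ioc 0 t, g u

section HardyAverage

variable {g : ℝ → ℝ} {p : ℝ}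

theorem hardyAverage_nonneg (hg0 : ∀ t ∈ Ioc (0 : ℝ) 1, 0 ≤ g t) {t : ℝ} (ht : t ∈ Ioc (0 : ℝ) 1) :
    0 ≤ hardyAverage g t :=
  mul_nonneg (one_div_nonneg.2 ht.1.le)
    (setIntegral_nonneg measurableSet_Ioc fun u hu => hg0 u ⟨hu.1, hu.2.trans ht.2⟩)

theorem le_hardyAverage (hmono : AntitoneOn g (Ioc 0 1)) (hgint : IntegrableOn g (Ioc 0 1))
    {t : ℝ} (ht : t ∈ Ioc (0 : ℝ) 1) : g t ≤ hardyAverage g t := by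
  have hsub : Ioc 0 t ⊆ Ioc (0 : ℝ) 1 := Ioc_subset_Ioc_right ht.2
  have hint : t * g t ≤ ∫ u in Ioc 0 t, g u := by
    have := setIntegral_mono_on (integrableOn_const (C := g t) (by simp)) (hgint.mono_set hsub)
      measurableSet_Ioc fun u hu => hmono (hsub hu) ht hu.2
    simpa [Real.volume_Ioc, ht.1.le] using this
  rw [hardyAverage, one_div, ← div_eq_inv_mul, le_div_iff₀ ht.1, mul_comm]
  exact hint

theorem continuousOn_hardyAverage (hgint : IntegrableOn g (Ioc 0 1)) :
    ContinuousOn (hardyAverage g) (Ioc 0 1) := by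
  have hF : ContinuousOn (fun t => ∫ u in Ioc 0 t, g u) (Icc 0 1) :=
    intervalIntegral.continuousOn_primitive ((integrableOn_Icc_iff_integrableOn_Ioc).2 hgint)
  exact (continuousOn_const.div continuousOn_id fun t ht => ht.1.ne').mul
    (hF.mono Ioc_subset_Icc_self)

theorem hasDerivAt_hardyAverage (hgint : IntegrableOn g (Ioc 0 1)) {x : ℝ}
    (hx : x ∈ Ioo (0 : ℝ) 1) (hgx : ContinuousAt g x) :
    HasDerivAt (hardyAverage g) ((g x - hardyAverage g x) / x) x := by
  have hF : HasDerivAt (fun t => ∫ u in (0 : ℝ)..t, g u) (g x) x := by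
    refine intervalIntegral.integral_hasDerivAt_right ?_ ?_ hgx
    · exact (intervalIntegrable_iff_integrableOn_Ioc_of_le hx.1.le).2
        (hgint.mono_set (Ioc_subset_Ioc_right hx.2.le))
    · exact ⟨Ioo 0 1, Ioo_mem_nhds hx.1 hx.2, (hgint.mono_set Ioo_subset_Ioc_self).1⟩
  have hF' : HasDerivAt (fun t => ∫ u in Ioc 0 t, g u) (g x) x :=
    hF.congr_of_eventuallyEq <| (lt_mem_nhds hx.1).mono fun t ht =>
      (intervalIntegral.integral_of_le ht.le).symm
  have hinv : HasDerivAt (fun t : ℝ => 1 / t) (-(x ^ 2)⁻¹) x := by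
    simpa only [one_div] using hasDerivAt_inv hx.1.ne'
  refine (hinv.mul hF').congr_deriv ?_
  have hx0 : x ≠ 0 := hx.1.ne'
  simp only [hardyAverage]
  field_simp
  ring

theorem hasDerivAt_mul_hardyAverage_rpow (hp : 1 ≤ p) (hgint : IntegrableOn g (Ioc 0 1))
    {x : ℝ} (hx : x ∈ Ioo (0 : ℝ) 1) (hgx : ContinuousAt g x) (hH0 : 0 ≤ hardyAverage g x) :
    HasDerivAt (fun t => t * hardyAverage g t ^ p)
      (p * (hardyAverage g x ^ (p - 1) * g x) - (p - 1) * hardyAverage g x ^ p) x := by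
  have hpow : hardyAverage g x ^ p = hardyAverage g x ^ (p - 1) * hardyAverage g x := by
    rw [← Real.rpow_add_one' hH0 (by linarith), sub_add_cancel]
  refine ((hasDerivAt_id x).mul
    ((hasDerivAt_hardyAverage hgint hx hgx).rpow_const (Or.inr hp))).congr_deriv ?_
  have hx0 : x ≠ 0 := hx.1.ne'
  rw [hpow, id]
  field_simp
  ring

theorem integrableOn_hardyAverage_rpow_Ioc (hgint : IntegrableOn g (Ioc 0 1)) (hp : 0 ≤ p)
    {ε : ℝ} (hε : 0 < ε) : IntegrableOn (fun t => hardyAverage g t ^ p) (Ioc ε 1) :=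
  (((continuousOn_hardyAverage hgint).mono fun _ ht => ⟨hε.trans_le ht.1, ht.2⟩).rpow_const
    fun _ _ => Or.inr hp).integrableOn_Icc.mono_set Ioc_subset_Icc_self

theorem integrableOn_hardyAverage_rpow_sub_mul_rpow_Ioc {r : ℝ} (hr : 0 < r) (hrp : r ≤ p)
    (hg0 : ∀ t ∈ Ioc (0 : ℝ) 1, 0 ≤ g t) (hmono : AntitoneOn g (Ioc 0 1))
    (hgint : IntegrableOn g (Ioc 0 1)) {ε : ℝ} (hε : ε ∈ Ioc (0 : ℝ) 1) :
    IntegrableOn (fun t => hardyAverage g t ^ (p - r) * g t ^ r) (Ioc ε 1) := by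
  have hsub : Ioc ε 1 ⊆ Ioc (0 : ℝ) 1 := Ioc_subset_Ioc_left hε.1.le
  exact IntegrableOn.rpow_sub_mul_rpow_of_le measurableSet_Ioc hr hrp
    ((continuousOn_hardyAverage hgint).mono hsub)
    (aemeasurable_restrict_of_antitoneOn measurableSet_Ioc (hmono.mono hsub)).aestronglyMeasurable
    (fun t ht => hg0 t (hsub ht)) (fun t ht => le_hardyAverage hmono hgint (hsub ht))
    (integrableOn_hardyAverage_rpow_Ioc hgint (hr.le.trans hrp) hε.1)

theorem hardyAverage_rpow_sub_eq_integral (hp : 1 ≤ p) (hg0 : ∀ t ∈ Ioc (0 : ℝ) 1, 0 ≤ g t)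
    (hmono : AntitoneOn g (Ioc 0 1)) (hgint : IntegrableOn g (Ioc 0 1)) {ε : ℝ}
    (hε : ε ∈ Ioc (0 : ℝ) 1) :
    hardyAverage g 1 ^ p - ε * hardyAverage g ε ^ p =
      ∫ t in Ioc ε 1,
        (p * (hardyAverage g t ^ (p - 1) * g t) - (p - 1) * hardyAverage g t ^ p) := by
  have hA : IntegrableOn (fun t => hardyAverage g t ^ (p - 1) * g t) (Ioc ε 1) := by
    simpa only [Real.rpow_one] using
      integrableOn_hardyAverage_rpow_sub_mul_rpow_Ioc one_pos hp hg0 hmono hgint hε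
  have hB := integrableOn_hardyAverage_rpow_Ioc (p := p) hgint (by linarith) hε.1
  have hcont : ContinuousOn (fun t => t * hardyAverage g t ^ p) (Icc ε 1) :=
    continuousOn_id.mul (((continuousOn_hardyAverage hgint).mono
      fun _ ht => ⟨hε.1.trans_le ht.1, ht.2⟩).rpow_const fun _ _ => Or.inr (by linarith))
  have hderiv : ∀ x ∈ Ioo ε 1 \ {x ∈ Ioc 0 1 | ¬ContinuousWithinAt g (Ioc 0 1) x},
      HasDerivAt (fun t => t * hardyAverage g t ^ p)
        (p * (hardyAverage g x ^ (p - 1) * g x) - (p - 1) * hardyAverage g x ^ p) x := by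
    rintro x ⟨hx, hxc⟩
    have hx01 : x ∈ Ioo (0 : ℝ) 1 := ⟨hε.1.trans hx.1, hx.2⟩
    have hgx : ContinuousAt g x := by
      refine ContinuousWithinAt.continuousAt ?_ (Ioc_mem_nhds hx01.1 hx01.2)
      by_contra h
      exact hxc ⟨Ioo_subset_Ioc_self hx01, h⟩
    exact hasDerivAt_mul_hardyAverage_rpow hp hgint hx01 hgx
      (hardyAverage_nonneg hg0 (Ioo_subset_Ioc_self hx01))
  rw [← intervalIntegral.integral_of_le hε.2,
    integral_eq_of_hasDerivAt_off_countable_of_le _ _ hε.2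
      hmono.countable_not_continuousWithinAt hcont hderiv
      ((intervalIntegrable_iff_integrableOn_Ioc_of_le hε.2).2
        ((hA.const_mul p).sub (hB.const_mul (p - 1)))), one_mul]

theorem mul_setIntegral_Ioc_hardyAverage_rpow_le (hp : 1 ≤ p) {q β : ℝ} (hq : 1 ≤ q) (hqp : q ≤ p)
    (hβ : 0 < β) (hg0 : ∀ t ∈ Ioc (0 : ℝ) 1, 0 ≤ g t) (hmono : AntitoneOn g (Ioc 0 1))
    (hgint : IntegrableOn g (Ioc 0 1)) {ε : ℝ} (hε : ε ∈ Ioc (0 : ℝ) 1) :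
    ((p - 1) * q * β + (p - q)) * ∫ t in Ioc ε 1, hardyAverage g t ^ p ≤
      q * (β + 1) * (ε * hardyAverage g ε ^ p - hardyAverage g 1 ^ p) +
        p * (β + 1) ^ q * ∫ t in Ioc ε 1, hardyAverage g t ^ (p - q) * g t ^ q := by
  have hsub : Ioc ε 1 ⊆ Ioc (0 : ℝ) 1 := Ioc_subset_Ioc_left hε.1.le
  have hB := integrableOn_hardyAverage_rpow_Ioc (p := p) hgint (by linarith) hε.1
  have hA : IntegrableOn (fun t => hardyAverage g t ^ (p - 1) * g t) (Ioc ε 1) := by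
    simpa only [Real.rpow_one] using
      integrableOn_hardyAverage_rpow_sub_mul_rpow_Ioc one_pos hp hg0 hmono hgint hε
  have hC := integrableOn_hardyAverage_rpow_sub_mul_rpow_Ioc (by linarith) hqp hg0 hmono hgint hε
  have hyoung : q * (β + 1) * ∫ t in Ioc ε 1, hardyAverage g t ^ (p - 1) * g t ≤
      (q - 1) * (∫ t in Ioc ε 1, hardyAverage g t ^ p) +
        (β + 1) ^ q * ∫ t in Ioc ε 1, hardyAverage g t ^ (p - q) * g t ^ q := by
    rw [← integral_const_mul, ← integral_const_mul, ← integral_const_mul,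
      ← integral_add (hB.const_mul _) (hC.const_mul _)]
    exact setIntegral_mono_on (hA.const_mul _) ((hB.const_mul _).add (hC.const_mul _))
      measurableSet_Ioc fun t ht => young_rpow_sub_one_mul_le hq hβ (hg0 t (hsub ht))
        (le_hardyAverage hmono hgint (hsub ht))
  have hid := hardyAverage_rpow_sub_eq_integral hp hg0 hmono hgint hε
  rw [integral_sub (hA.const_mul _) (hB.const_mul _), integral_const_mul,
    integral_const_mul] at hid
  linear_combination p * hyoung + q * (β + 1) * hid

theorem mul_hardyAverage_rpow_le (hp : 1 ≤ p) (hg0 : ∀ t ∈ Ioc (0 : ℝ) 1, 0 ≤ g t)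
    (hgint : IntegrableOn g (Ioc 0 1)) (hgp : IntegrableOn (fun t => g t ^ p) (Ioc 0 1))
    {ε : ℝ} (hε : ε ∈ Ioc (0 : ℝ) 1) :
    ε * hardyAverage g ε ^ p ≤ ∫ t in Ioc 0 ε, g t ^ p := by
  have hsub : Ioc 0 ε ⊆ Ioc (0 : ℝ) 1 := Ioc_subset_Ioc_right hε.2
  have hjensen := (convexOn_rpow hp).map_set_average_le
    (continuousOn_id.rpow_const fun _ _ => Or.inr (by linarith)) isClosed_Ici
    (by simpa [Real.volume_Ioc] using hε.1) (by simp [Real.volume_Ioc])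
    ((ae_restrict_iff' measurableSet_Ioc).2 (ae_of_all _ fun t ht => hg0 t (hsub ht)))
    (hgint.mono_set hsub) (hgp.mono_set hsub)
  simp only [setAverage_eq, Real.volume_real_Ioc_of_le hε.1.le, sub_zero, smul_eq_mul]
    at hjensen
  rw [hardyAverage, one_div, ← le_inv_mul_iff₀ hε.1]
  exact hjensen

theorem tendsto_mul_hardyAverage_rpow_nhdsGT_zero (hp : 1 ≤ p)
    (hg0 : ∀ t ∈ Ioc (0 : ℝ) 1, 0 ≤ g t) (hgint : IntegrableOn g (Ioc 0 1))
    (hgp : IntegrableOn (fun t => g t ^ p) (Ioc 0 1)) :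
    Tendsto (fun ε => ε * hardyAverage g ε ^ p) (𝓝[>] 0) (𝓝 0) := by
  have hprim := intervalIntegral.continuousOn_primitive
    ((integrableOn_Icc_iff_integrableOn_Ioc (f := fun t => g t ^ p)).2 hgp)
  have hm : Tendsto (fun ε => ∫ t in Ioc 0 ε, g t ^ p) (𝓝[>] 0) (𝓝 0) := by
    simpa using ((hprim 0 (left_mem_Icc.2 zero_le_one)).mono_of_mem_nhdsWithin
      (Icc_mem_nhdsGT zero_lt_one)).tendsto
  refine squeeze_zero' ?_ ?_ hm
  · filter_upwards [Ioc_mem_nhdsGT zero_lt_one] with ε hε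
    exact mul_nonneg hε.1.le (Real.rpow_nonneg (hardyAverage_nonneg hg0 hε) p)
  · filter_upwards [Ioc_mem_nhdsGT zero_lt_one] with ε hε
    exact mul_hardyAverage_rpow_le hp hg0 hgint hgp hε

theorem integrableOn_hardyAverage_rpow (hp : 1 < p) (hg0 : ∀ t ∈ Ioc (0 : ℝ) 1, 0 ≤ g t)
    (hmono : AntitoneOn g (Ioc 0 1)) (hgint : IntegrableOn g (Ioc 0 1))
    (hgp : IntegrableOn (fun t => g t ^ p) (Ioc 0 1)) :
    IntegrableOn (fun t => hardyAverage g t ^ p) (Ioc 0 1) := by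
  set M := ∫ t in Ioc 0 1, g t ^ p
  have hgp0 : 0 ≤ᵐ[volume.restrict (Ioc 0 1)] fun t => g t ^ p :=
    (ae_restrict_iff' measurableSet_Ioc).2 (ae_of_all _ fun t ht => Real.rpow_nonneg (hg0 t ht) p)
  -- the truncated inequality with `q = p`, `β = 1` has only `∫ g ^ p` on its right-hand side
  have hbound : ∀ ε ∈ Ioc (0 : ℝ) 1,
      ∫ t in Ioc ε 1, hardyAverage g t ^ p ≤ (2 + 2 ^ p) * M / (p - 1) := by
    intro ε hε
    have htrunc :=
      mul_setIntegral_Ioc_hardyAverage_rpow_le hp.le hp.le le_rfl one_pos hg0 hmono hgint hε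
    simp only [sub_self, Real.rpow_zero, one_mul, mul_one, add_zero, one_add_one_eq_two]
      at htrunc
    have hm : ε * hardyAverage g ε ^ p ≤ M :=
      (mul_hardyAverage_rpow_le hp.le hg0 hgint hgp hε).trans
        (setIntegral_mono_set hgp hgp0 (Ioc_subset_Ioc_right hε.2).eventuallyLE)
    have hM : ∫ t in Ioc ε 1, g t ^ p ≤ M :=
      setIntegral_mono_set hgp hgp0 (Ioc_subset_Ioc_left hε.1.le).eventuallyLE
    have h1 : 0 ≤ hardyAverage g 1 ^ p :=
      Real.rpow_nonneg (hardyAverage_nonneg hg0 ⟨one_pos, le_rfl⟩) p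
    have hp0 : 0 < p := by linarith
    rw [le_div_iff₀ (by linarith), mul_comm]
    refine le_of_mul_le_mul_left ?_ hp0
    linarith [mul_le_mul_of_nonneg_left hm (by positivity : 0 ≤ p * 2),
      mul_le_mul_of_nonneg_left hM (by positivity : 0 ≤ p * 2 ^ p), mul_nonneg hp0.le h1]
  refine integrableOn_Ioc_of_intervalIntegral_norm_bounded_left (l := atTop)
    (I := (2 + 2 ^ p) * M / (p - 1))
    (fun n => integrableOn_hardyAverage_rpow_Ioc hgint (by linarith) (by positivity))
    tendsto_one_div_add_atTop_nhds_zero_nat (Eventually.of_forall fun n => ?_)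
  have hn : 1 / ((n : ℝ) + 1) ∈ Ioc (0 : ℝ) 1 :=
    ⟨by positivity, div_le_one_of_le₀ (by linarith [n.cast_nonneg (α := ℝ)]) (by positivity)⟩
  rw [setIntegral_congr_fun measurableSet_Ioc fun t ht => Real.norm_of_nonneg
    (Real.rpow_nonneg (hardyAverage_nonneg hg0 (Ioc_subset_Ioc_left hn.1.le ht)) p)]
  exact hbound _ hn

theorem mul_integral_hardyAverage_rpow_le (hp : 1 < p) {q β : ℝ} (hq : 1 ≤ q) (hqp : q ≤ p)
    (hβ : 0 < β) (hg0 : ∀ t ∈ Ioc (0 : ℝ) 1, 0 ≤ g t) (hmono : AntitoneOn g (Ioc 0 1))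
    (hgint : IntegrableOn g (Ioc 0 1)) (hgp : IntegrableOn (fun t => g t ^ p) (Ioc 0 1)) :
    ((p - 1) * q * β + (p - q)) * ∫ t in Ioc 0 1, hardyAverage g t ^ p ≤
      -(q * (β + 1) * hardyAverage g 1 ^ p) +
        p * (β + 1) ^ q * ∫ t in Ioc 0 1, hardyAverage g t ^ (p - q) * g t ^ q := by
  have hHp := integrableOn_hardyAverage_rpow hp hg0 hmono hgint hgp
  have hC := IntegrableOn.rpow_sub_mul_rpow_of_le measurableSet_Ioc (by linarith) hqp
    (continuousOn_hardyAverage hgint)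
    (aemeasurable_restrict_of_antitoneOn measurableSet_Ioc hmono).aestronglyMeasurable hg0
    (fun t ht => le_hardyAverage hmono hgint ht) hHp
  have hlim := (((tendsto_mul_hardyAverage_rpow_nhdsGT_zero hp.le hg0 hgint hgp).sub_const
    (hardyAverage g 1 ^ p)).const_mul (q * (β + 1))).add
      ((tendsto_setIntegral_Ioc_nhdsGT zero_lt_one hC).const_mul (p * (β + 1) ^ q))
  rw [zero_sub, mul_neg] at hlim
  refine le_of_tendsto_of_tendsto ((tendsto_setIntegral_Ioc_nhdsGT zero_lt_one hHp).const_mul _)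
    hlim ?_
  filter_upwards [Ioc_mem_nhdsGT zero_lt_one] with ε hε
  exact mul_setIntegral_Ioc_hardyAverage_rpow_le hp.le hq hqp hβ hg0 hmono hgint hε

end HardyAverage

/-- Hardy-type inequality (Corollary 2): for `p > 1`, `1 ≤ q ≤ p`, `β > 0`, and
`g : (0,1] → [0,∞)` non-increasing with `∫₀¹ g = f` and `g ∈ L^p(0,1)`:
`∫₀¹ ((1/t)∫₀ᵗ g)^p dt ≤ −(q(β+1)/((p−1)qβ+(p−q)))f^p
  + (p(β+1)^q/((p−1)qβ+(p−q)))∫₀¹ ((1/t)∫₀ᵗ g)^(p−q) g(t)^q dt`. -/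
theorem stmt10 (p q β f : ℝ) (g : ℝ → ℝ) (hp : 1 < p) (hq1 : 1 ≤ q) (hqp : q ≤ p)
    (hβ : 0 < β) (hg0 : ∀ t ∈ Set.Ioc (0 : ℝ) 1, 0 ≤ g t)
    (hmono : AntitoneOn g (Set.Ioc 0 1))
    (hgp : IntegrableOn (fun t => g t ^ p) (Set.Ioc 0 1))
    (hf : (∫ u in Set.Ioc (0 : ℝ) 1, g u) = f) :
    (∫ t in Set.Ioc (0 : ℝ) 1, ((1 / t) * ∫ u in Set.Ioc (0 : ℝ) t, g u) ^ p) ≤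
      -(q * (β + 1) / ((p - 1) * q * β + (p - q))) * f ^ p +
        (p * (β + 1) ^ q / ((p - 1) * q * β + (p - q))) *
          ∫ t in Set.Ioc (0 : ℝ) 1,
            ((1 / t) * ∫ u in Set.Ioc (0 : ℝ) t, g u) ^ (p - q) * g t ^ q := by
  have hgint : IntegrableOn g (Ioc 0 1) :=
    Integrable.of_rpow hp.le
      (aemeasurable_restrict_of_antitoneOn measurableSet_Ioc hmono).aestronglyMeasurable
      ((ae_restrict_iff' measurableSet_Ioc).2 (ae_of_all _ hg0)) hgp
  set D := (p - 1) * q * β + (p - q)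
  have hD : 0 < D := by
    have := mul_pos (mul_pos (sub_pos.2 hp) (by linarith : 0 < q)) hβ
    linarith
  have hH1 : hardyAverage g 1 = f := by simp [hardyAverage, hf]
  have key := mul_integral_hardyAverage_rpow_le hp hq1 hqp hβ hg0 hmono hgint hgp
  rw [hH1] at key
  unfold hardyAverage at key
  rw [show ∀ a b x y : ℝ, -(a / D) * x + b / D * y = (-(a * x) + b * y) / D from
    fun _ _ _ _ => by ring, le_div_iff₀ hD]
  linarith
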